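/- arXiv:1610.09057 — 3 statements merged into one kernel-verified Lean document; each statement's English description precedes it below -/
import Mathlib

section
/- Let (ν_n)_{n≥0} be a sequence of random probability measures on a Polish space P. For each n, let (A_n, B_n) be two random variables that, conditionally on ν_n, are independent with common distribution ν_n. If (A_n, B_n) converges in distribution to (A, B) where A and B are independent random variables with common deterministic distribution ν, then ν_n converges in distribution to ν for the topology of weak convergence on probability measures on P. -/
/-!
Centre the test function, `Ψ = Φ - ∫ Φ dν`. Since `A_n` and `B_n` are conditionally independent
given `ν_n`, the product test function `Ψ(a) Ψ(b)` integrates against the law of `(A_n, B_n)` to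
the second moment `E[(∫ Ψ dν_n)²]`, while against `ν ⊗ ν` it integrates to `(∫ Ψ dν)² = 0`. So
`∫ Φ dν_n → ∫ Φ dν` in `L²`, hence in probability.
-/

open MeasureTheory Filter Topology

lemma abs_mul_le_sq_of_abs_le {a b C : ℝ} (ha : |a| ≤ C) (hb : |b| ≤ C) : |a * b| ≤ C ^ 2 := by
  rw [abs_mul, sq]
  exact mul_le_mul ha hb (abs_nonneg _) ((abs_nonneg _).trans ha)

section

open ProbabilityTheory

variable {Ω P : Type*} [MeasurableSpace Ω] [MeasurableSpace P]

lemma integral_sub_const {μ : Measure Ω} [IsProbabilityMeasure μ] {f : Ω → ℝ}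
    (hf : Integrable f μ) (c : ℝ) : ∫ x, (f x - c) ∂μ = ∫ x, f x ∂μ - c := by
  rw [integral_sub hf (integrable_const c)]
  simp

lemma abs_integral_le_of_abs_le {μ : Measure Ω} [IsProbabilityMeasure μ] {f : Ω → ℝ} {C : ℝ}
    (h : ∀ x, |f x| ≤ C) : |∫ x, f x ∂μ| ≤ C := by
  simpa using norm_integral_le_of_norm_le_const (μ := μ) (f := f) (ae_of_all _ h)

theorem MeasureTheory.Measure.integral_comp {E : Type*} [NormedAddCommGroup E] [NormedSpace ℝ E]
    {μ : Measure Ω} {κ : Kernel Ω P} {f : P → E} (hf : Integrable f (κ ∘ₘ μ)) :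
    ∫ x, f x ∂(κ ∘ₘ μ) = ∫ ω, ∫ x, f x ∂κ ω ∂μ := by
  rw [Measure.comp_eq_comp_const_apply] at hf ⊢
  rw [Kernel.integral_comp hf, Kernel.const_apply]

lemma integral_comp_prod_self_mul {μ : Measure Ω} [IsFiniteMeasure μ] (κ : Kernel Ω P)
    [IsFiniteKernel κ] {f : P → ℝ} (hf : Measurable f) {C : ℝ} (hC : ∀ x, |f x| ≤ C) :
    ∫ p, f p.1 * f p.2 ∂((κ ×ₖ κ) ∘ₘ μ) = ∫ ω, (∫ x, f x ∂κ ω) ^ 2 ∂μ := by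
  have hint : Integrable (fun p : P × P => f p.1 * f p.2) ((κ ×ₖ κ) ∘ₘ μ) :=
    .of_bound (by fun_prop) (C ^ 2) (ae_of_all _ fun p => abs_mul_le_sq_of_abs_le (hC p.1) (hC p.2))
  rw [Measure.integral_comp hint]
  refine integral_congr_ae (ae_of_all _ fun ω => ?_)
  simp only [Kernel.prod_apply, integral_prod_mul, sq]

lemma integral_bind_prod_self_mul {μ : Measure Ω} [IsFiniteMeasure μ] {ν : Ω → Measure P}
    (hν : Measurable ν) [∀ ω, IsProbabilityMeasure (ν ω)] {f : P → ℝ} (hf : Measurable f) {C : ℝ}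
    (hC : ∀ x, |f x| ≤ C) :
    ∫ p, f p.1 * f p.2 ∂(μ.bind fun ω => (ν ω).prod (ν ω)) = ∫ ω, (∫ x, f x ∂ν ω) ^ 2 ∂μ := by
  let κ : Kernel Ω P := ⟨ν, hν⟩
  have : IsMarkovKernel κ := ⟨inferInstance⟩
  have hprod : (fun ω => (ν ω).prod (ν ω)) = ⇑(κ ×ₖ κ) := funext fun ω => (κ.prod_apply κ ω).symm
  exact hprod ▸ integral_comp_prod_self_mul κ hf hC

lemma tendstoInMeasure_zero_of_tendsto_integral_sq {ι : Type*} {l : Filter ι} {μ : Measure Ω}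
    {Y : ι → Ω → ℝ} (hY : ∀ i, MemLp (Y i) 2 μ)
    (h : Tendsto (fun i => ∫ ω, Y i ω ^ 2 ∂μ) l (𝓝 0)) :
    TendstoInMeasure μ Y l 0 := by
  refine tendstoInMeasure_of_tendsto_eLpNorm two_ne_zero (fun i => (hY i).1)
    aestronglyMeasurable_const ?_
  have hsqrt := ENNReal.tendsto_ofReal (h.rpow_const (p := (2 : ℝ)⁻¹) (Or.inr (by norm_num)))
  rw [Real.zero_rpow (by norm_num), ENNReal.ofReal_zero] at hsqrt
  refine hsqrt.congr fun i => ?_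
  rw [sub_zero, (hY i).eLpNorm_eq_integral_rpow_norm two_ne_zero ENNReal.ofNat_ne_top]
  simp [sq_abs]

end

theorem stmt_0_general {P : Type*} [MetricSpace P] [MeasurableSpace P] [BorelSpace P]
    {Ω : Type*} [MeasurableSpace Ω] (ℙ : Measure Ω) [IsProbabilityMeasure ℙ]
    (ν : ℕ → Ω → Measure P) (hprob : ∀ n ω, IsProbabilityMeasure (ν n ω))
    (hmeas : ∀ n, Measurable (ν n))
    (νlim : Measure P) [IsProbabilityMeasure νlim]
    (hconv : ∀ g : P × P → ℝ, Continuous g → (∃ C, ∀ p, |g p| ≤ C) →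
      Tendsto (fun n => ∫ p, g p ∂(ℙ.bind (fun ω => (ν n ω).prod (ν n ω))))
        atTop (𝓝 (∫ p, g p ∂(νlim.prod νlim)))) :
    ∀ Φ : P → ℝ, Continuous Φ → (∃ C, ∀ x, |Φ x| ≤ C) →
      ∀ ε : ℝ, 0 < ε →
        Tendsto (fun n => ℙ {ω | ε ≤ |(∫ x, Φ x ∂(ν n ω)) - ∫ x, Φ x ∂νlim|})
          atTop (𝓝 0) := by
  rintro Φ hΦ ⟨C, hC⟩ ε hε
  have := hprob
  set m := ∫ x, Φ x ∂νlim
  have hΨ : ∀ x, |Φ x - m| ≤ C + |m| := fun x => (abs_sub _ _).trans (by gcongr; exact hC x)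
  have hcentre : ∀ (μ : Measure P) [IsProbabilityMeasure μ], ∫ x, (Φ x - m) ∂μ = ∫ x, Φ x ∂μ - m :=
    fun μ _ => integral_sub_const (.of_bound hΦ.aestronglyMeasurable C (ae_of_all _ hC)) m
  have hL2 : Tendsto (fun n => ∫ ω, (∫ x, Φ x ∂ν n ω - m) ^ 2 ∂ℙ) atTop (𝓝 0) := by
    have h := hconv (fun p => (Φ p.1 - m) * (Φ p.2 - m)) (by fun_prop)
      ⟨_, fun p => abs_mul_le_sq_of_abs_le (hΨ p.1) (hΨ p.2)⟩
    simpa only [integral_bind_prod_self_mul (hmeas _) (hΦ.measurable.sub_const m) hΨ, hcentre,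
      integral_prod_mul (fun x => Φ x - m) (fun x => Φ x - m), m, sub_self, mul_zero] using h
  have hmemLp : ∀ n, MemLp (fun ω => ∫ x, Φ x ∂ν n ω - m) 2 ℙ := fun n =>
    .of_bound ((hΦ.stronglyMeasurable.integral_kernel (κ := ⟨ν n, hmeas n⟩)).measurable.sub_const
      m).aestronglyMeasurable (C + |m|)
      (ae_of_all _ fun ω => by rw [Real.norm_eq_abs, ← hcentre]; exact abs_integral_le_of_abs_le hΨ)
  simpa [Real.dist_eq] using
    tendstoInMeasure_iff_dist.1 (tendstoInMeasure_zero_of_tendsto_integral_sq hmemLp hL2) ε hε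

/-- If `(A_n, B_n)` drawn (conditionally i.i.d.) from random probability
measures `ν n` converge in distribution to an independent pair with common deterministic
law `νlim`, then `ν n` converges in probability (hence in distribution) to `νlim` for the
weak topology. -/
theorem stmt_0 {P : Type*} [MetricSpace P] [PolishSpace P] [MeasurableSpace P] [BorelSpace P]
    {Ω : Type*} [MeasurableSpace Ω] (ℙ : Measure Ω) [IsProbabilityMeasure ℙ]
    (ν : ℕ → Ω → Measure P) (hprob : ∀ n ω, IsProbabilityMeasure (ν n ω))
    (hmeas : ∀ n, Measurable (ν n))
    (νlim : Measure P) [IsProbabilityMeasure νlim]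
    (hconv : ∀ g : P × P → ℝ, Continuous g → (∃ C, ∀ p, |g p| ≤ C) →
      Tendsto (fun n => ∫ p, g p ∂(ℙ.bind (fun ω => (ν n ω).prod (ν n ω))))
        atTop (𝓝 (∫ p, g p ∂(νlim.prod νlim)))) :
    ∀ Φ : P → ℝ, Continuous Φ → (∃ C, ∀ x, |Φ x| ≤ C) →
      ∀ ε : ℝ, 0 < ε →
        Tendsto (fun n => ℙ {ω | ε ≤ |(∫ x, Φ x ∂(ν n ω)) - ∫ x, Φ x ∂νlim|})
          atTop (𝓝 0) :=
  stmt_0_general ℙ ν hprob hmeas νlim hconv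
end

section
/- For every node u of a planar tree t (other than the root), the depth of u in t equals the left-depth of its image under the rotation correspondence plus one: |u| = |Ψ(u)|_ℓ + 1. -/
/-- The rotation correspondence on nodes: children of a node `u` of a planar tree are
`u0, u1, …, uc`; the leftmost child relation is sent to the left-child (letter `false`)
relation, and the next-sibling relation is sent to the right-child (letter `true`)
relation, the leftmost child of the root being sent to the empty word. -/
def psiRot : List ℕ → List Bool
  | [] => []
  | a :: as => List.replicate a true ++ as.flatMap (fun b => false :: List.replicate b true)

/-- A planar tree: a prefix-closed set of finite words over ℕ, containing the root and
closed under taking earlier siblings. -/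
def IsPlanarTree (t : Set (List ℕ)) : Prop :=
  ([] : List ℕ) ∈ t ∧ (∀ (u : List ℕ) (a : ℕ), u ++ [a] ∈ t → u ∈ t) ∧
    (∀ (u : List ℕ) (a b : ℕ), u ++ [a] ∈ t → b ≤ a → u ++ [b] ∈ t)

/-- for every non-root node `u` of a planar tree, the depth of `u` equals the
left-depth (number of `0`-letters, here `false`) of its image under the rotation
correspondence, plus one. -/
theorem stmt_3 (t : Set (List ℕ)) (ht : IsPlanarTree t) (u : List ℕ)
    (hu : u ∈ t) (hne : u ≠ []) :
    u.length = (psiRot u).count false + 1 := by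
  match u, hne with
  | a :: as, _ =>
    simp only [psiRot, List.count_append, List.length_cons]
    have h1 : (List.replicate a true).count false = 0 := by
      simp [List.count_replicate]
    have h2 : ∀ l : List ℕ,
        (l.flatMap (fun b => false :: List.replicate b true)).count false = l.length := by
      intro l
      induction l with
      | nil => simp
      | cons x xs ih =>
        simp [List.flatMap_cons, List.count_append, List.count_cons, ih,
          List.count_replicate]
    rw [h1, h2]; omega
end

section
/- Let W be a node chosen uniformly at random among the nodes of a random binary search tree with n nodes (under the permutation model). Then, conditionally on |W| = k, the word W = w₁⋯w_k has letters w₁, …, w_k that are independent and uniformly distributed on {0,1}. -/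
open scoped ENNReal

/-- Uniform distribution on a finite set of binary words (junk value if empty). -/
noncomputable def unifOr (s : Finset (List Bool)) : PMF (List Bool) :=
  if h : s.Nonempty then PMF.uniformOfFinset s h else PMF.pure []

/-- External positions (leaves of the completed tree) of an incomplete binary tree. -/
def extPos (t : Finset (List Bool)) : Finset (List Bool) :=
  (t.image (fun u => u ++ [false]) ∪ t.image (fun u => u ++ [true])) \ t

/-- The random binary search tree under the permutation model, as a Markov chain:
start from the root and repeatedly insert a uniformly chosen external position. -/
noncomputable def bstPMF : ℕ → PMF (Finset (List Bool))
  | 0 => PMF.pure {([] : List Bool)}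
  | n + 1 => (bstPMF n).bind fun t => (unifOr (extPos t)).map fun u => insert u t

/-!
Exchanging the subtrees rooted at `u0` and `u1` flips the letter at position `|u|` of every
proper extension of `u`. This involution fixes the root and commutes with taking external
positions, so by induction along the insertion chain it preserves the law of `BST_n`, hence
that of a uniform node `W`. Every word of length `k` is carried to `0^k` by such flips, so all
`2^k` words of length `k` are equally likely.
-/

open Function

def swapSubtrees : List Bool → List Bool → List Bool
  | [], [] => []
  | [], b :: v => (!b) :: v
  | _ :: _, [] => []
  | a :: u, b :: v => if a = b then b :: swapSubtrees u v else b :: v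

@[simp]
lemma swapSubtrees_nil_right (u : List Bool) : swapSubtrees u [] = [] := by
  cases u <;> rfl

@[simp]
lemma swapSubtrees_self (u : List Bool) : swapSubtrees u u = u := by
  induction u with
  | nil => rfl
  | cons a u ih => simp [swapSubtrees, ih]

lemma swapSubtrees_involutive (u : List Bool) : Involutive (swapSubtrees u) := by
  induction u with
  | nil => rintro (_ | ⟨b, v⟩) <;> simp [swapSubtrees]
  | cons a u ih =>
    rintro (_ | ⟨b, v⟩)
    · rfl
    · by_cases h : a = b <;> simp [swapSubtrees, h, ih v]

lemma swapSubtrees_append_cons (u r : List Bool) (b : Bool) :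
    swapSubtrees u (u ++ b :: r) = u ++ (!b) :: r := by
  induction u with
  | nil => rfl
  | cons a u ih => simp [swapSubtrees, ih]

lemma swapSubtrees_append_singleton_self (u : List Bool) (b : Bool) :
    swapSubtrees u (u ++ [b]) = u ++ [!b] :=
  swapSubtrees_append_cons u [] b

lemma swapSubtrees_append_singleton_of_ne {u v : List Bool} (h : v ≠ u) (b : Bool) :
    swapSubtrees u (v ++ [b]) = swapSubtrees u v ++ [b] := by
  induction u generalizing v with
  | nil => cases v with
    | nil => exact absurd rfl h
    | cons c v => simp [swapSubtrees]
  | cons a u ih => cases v with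
    | nil => simp [swapSubtrees]
    | cons c v =>
      by_cases hac : a = c
      · subst hac
        simp [swapSubtrees, ih (by simpa using h)]
      · simp [swapSubtrees, hac]

def children (v : List Bool) : Finset (List Bool) := {v ++ [false], v ++ [true]}

lemma extPos_eq_biUnion_children_sdiff (t : Finset (List Bool)) :
    extPos t = t.biUnion children \ t := by
  ext x
  simp [extPos, children, ← exists_or, and_or_left, eq_comm]

lemma image_swapSubtrees_children (u v : List Bool) :
    (children v).image (swapSubtrees u) = children (swapSubtrees u v) := by
  by_cases h : v = u
  · subst h
    simp [children, swapSubtrees_append_singleton_self, Finset.pair_comm]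
  · simp [children, swapSubtrees_append_singleton_of_ne h]

lemma image_swapSubtrees_extPos (u : List Bool) (t : Finset (List Bool)) :
    (extPos t).image (swapSubtrees u) = extPos (t.image (swapSubtrees u)) := by
  rw [extPos_eq_biUnion_children_sdiff, extPos_eq_biUnion_children_sdiff,
    Finset.image_sdiff _ _ (swapSubtrees_involutive u).injective, Finset.biUnion_image,
    Finset.image_biUnion]
  simp only [image_swapSubtrees_children]

namespace PMF

variable {α : Type*}

lemma map_apply_of_involutive {f : α → α} (hf : Involutive f) (p : PMF α) (a : α) :
    p.map f a = p (f a) := by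
  rw [map_apply, tsum_eq_single (f a) fun b hb => if_neg fun h => hb (by rw [h, hf]),
    if_pos (hf a).symm]

lemma map_uniformOfFinset_of_involutive [DecidableEq α] {f : α → α} (hf : Involutive f)
    (s : Finset α) (hs : s.Nonempty) :
    (uniformOfFinset s hs).map f = uniformOfFinset (s.image f) (hs.image f) := by
  ext a
  rw [map_apply_of_involutive hf, uniformOfFinset_apply, uniformOfFinset_apply,
    Finset.card_image_of_injective _ hf.injective]
  have hmem : a ∈ s.image f ↔ f a ∈ s := by
    rw [← Finset.mem_coe, Finset.coe_image, Set.mem_image_iff_of_inverse hf hf, Finset.mem_coe]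
  by_cases h : f a ∈ s <;> simp [h, hmem]

end PMF

lemma unifOr_map_of_involutive {f : List Bool → List Bool} (hf : Involutive f)
    (hf_nil : f [] = []) (s : Finset (List Bool)) : (unifOr s).map f = unifOr (s.image f) := by
  rcases s.eq_empty_or_nonempty with rfl | hs
  · simp [unifOr, hf_nil, PMF.pure_map]
  · rw [unifOr, dif_pos hs, unifOr, dif_pos (hs.image f),
      PMF.map_uniformOfFinset_of_involutive hf]

lemma unifOr_map_swapSubtrees (u : List Bool) (s : Finset (List Bool)) :
    (unifOr s).map (swapSubtrees u) = unifOr (s.image (swapSubtrees u)) :=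
  unifOr_map_of_involutive (swapSubtrees_involutive u) (swapSubtrees_nil_right u) s

theorem bstPMF_map_image_swapSubtrees (u : List Bool) (n : ℕ) :
    (bstPMF n).map (Finset.image (swapSubtrees u)) = bstPMF n := by
  induction n with
  | zero => simp [bstPMF, PMF.pure_map]
  | succ n ih =>
    conv_rhs => rw [bstPMF, ← ih, PMF.bind_map]
    rw [bstPMF, PMF.map_bind]
    congr 1
    funext t
    rw [comp_apply, ← image_swapSubtrees_extPos, ← unifOr_map_swapSubtrees, PMF.map_comp,
      PMF.map_comp]
    congr 1
    funext v
    simp [Finset.image_insert]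

noncomputable def nodePMF (n : ℕ) : PMF (List Bool) := (bstPMF n).bind unifOr

lemma nodePMF_swapSubtrees (u : List Bool) (n : ℕ) (w : List Bool) :
    nodePMF n (swapSubtrees u w) = nodePMF n w := by
  have hmap : (nodePMF n).map (swapSubtrees u) = nodePMF n := by
    conv_rhs => rw [nodePMF, ← bstPMF_map_image_swapSubtrees u n, PMF.bind_map]
    simp only [nodePMF, PMF.map_bind, unifOr_map_swapSubtrees, comp_def]
  rw [← PMF.map_apply_of_involutive (swapSubtrees_involutive u), hmap]

lemma nodePMF_append_cons (n : ℕ) (v r : List Bool) (b : Bool) :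
    nodePMF n (v ++ b :: r) = nodePMF n (v ++ false :: r) := by
  cases b
  · rfl
  · rw [← nodePMF_swapSubtrees v, swapSubtrees_append_cons, Bool.not_true]

lemma nodePMF_append (n : ℕ) (v r : List Bool) :
    nodePMF n (v ++ r) = nodePMF n (v ++ List.replicate r.length false) := by
  induction r generalizing v with
  | nil => rfl
  | cons b r ih =>
    rw [nodePMF_append_cons, ← List.singleton_append, ← List.append_assoc, ih,
      List.length_cons, List.replicate_succ, List.append_assoc, List.singleton_append]

lemma nodePMF_eq_replicate (n : ℕ) (w : List Bool) :
    nodePMF n w = nodePMF n (List.replicate w.length false) := by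
  simpa using nodePMF_append n [] w

lemma nodePMF_eq_of_length_eq (n : ℕ) {v w : List Bool} (h : v.length = w.length) :
    nodePMF n v = nodePMF n w := by
  rw [nodePMF_eq_replicate, h, ← nodePMF_eq_replicate]

/-- let `W` be a uniform random node of the random binary search tree.
Conditionally on `|W| = k`, the letters of `W` are i.i.d. uniform on `{0,1}`;
equivalently, `P(W = w) = 2^{-k} P(|W| = k)` for every word `w` of length `k`. -/
theorem stmt_4 (n k : ℕ) (w : List Bool) (hw : w.length = k) :
    ((bstPMF n).bind unifOr) w =
      (1 / 2 : ℝ≥0∞) ^ k * ∑' v : {v : List Bool // v.length = k}, ((bstPMF n).bind unifOr) v := by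
  change nodePMF n w = _ * ∑' v : List.Vector Bool k, nodePMF n v.1
  have hsum : ∑' v : List.Vector Bool k, nodePMF n v.1 = 2 ^ k * nodePMF n w := by
    rw [tsum_fintype,
      Finset.sum_congr rfl fun v _ => nodePMF_eq_of_length_eq n (v.2.trans hw.symm),
      Finset.sum_const, Finset.card_univ, card_vector, nsmul_eq_mul]
    push_cast
    rfl
  rw [hsum, ← mul_assoc, ← mul_pow, ENNReal.div_mul_cancel two_ne_zero ENNReal.ofNat_ne_top,
    one_pow, one_mul]
end
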